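/- arXiv:1810.07979 — 2 statements merged into one kernel-verified Lean document; each statement's English description precedes it below -/
import Mathlib

section
/- For any ultradiscrete ballean (X,𝓔) we have add(B_X) < cof(B_X), where add(B_X) is the smallest cardinality of a family of bounded subsets of X having no bounded upper bound under inclusion and cof(B_X) is the smallest cardinality of a subfamily C of the bornology such that every bounded set is contained in some member of C. In particular, the bornology of an ultradiscrete ballean does not have a linearly ordered base. -/
universe u v

open Set

/-- A ballean: a set `X` with a family of entourages satisfying the three axioms. -/
structure Ballean (X : Type u) : Type u where
  entourages : Set (Set (X × X))
  diag_mem : ∀ E ∈ entourages, ∀ x : X, (x, x) ∈ E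
  comp_inv_sub : ∀ E ∈ entourages, ∀ F ∈ entourages, ∃ D ∈ entourages,
      {p : X × X | ∃ y : X, (p.1, y) ∈ E ∧ (p.2, y) ∈ F} ⊆ D
  sUnion_eq_univ : ⋃₀ entourages = Set.univ

namespace Ballean

variable {X : Type u}

/-- The ball `E[x]` of radius `E` centered at `x`. -/
def ball (E : Set (X × X)) (x : X) : Set X := {y | (x, y) ∈ E}

/-- The `E`-neighborhood `E[A]` of a set `A`. -/
def img (E : Set (X × X)) (A : Set X) : Set X := {y | ∃ a ∈ A, (a, y) ∈ E}

/-- A subset is bounded if it is contained in some ball. -/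
def IsBounded (B : Ballean X) (S : Set X) : Prop :=
  ∃ E ∈ B.entourages, ∃ x : X, S ⊆ ball E x

def Unbounded (B : Ballean X) : Prop := ¬ B.IsBounded Set.univ

/-- Two sets are asymptotically disjoint if `E[A] ∩ E[C]` is bounded for all entourages. -/
def AsympDisjoint (B : Ballean X) (A C : Set X) : Prop :=
  ∀ E ∈ B.entourages, B.IsBounded (img E A ∩ img E C)

/-- `U` is an asymptotic neighborhood of `A` if `E[A] \ U` is bounded for all entourages. -/
def AsympNbhd (B : Ballean X) (A U : Set X) : Prop :=
  ∀ E ∈ B.entourages, B.IsBounded (img E A \ U)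

/-- A ballean is normal if asymptotically disjoint sets have disjoint asymptotic
neighborhoods. -/
def Normal (B : Ballean X) : Prop :=
  ∀ A C : Set X, B.AsympDisjoint A C →
    ∃ U V : Set X, B.AsympNbhd A U ∧ B.AsympNbhd C V ∧ Disjoint U V

/-- A ballean is ultranormal if it contains no two unbounded asymptotically disjoint sets. -/
def Ultranormal (B : Ballean X) : Prop :=
  ∀ A C : Set X, B.AsympDisjoint A C → B.IsBounded A ∨ B.IsBounded C

/-- A ballean is discrete if it is unbounded and every entourage acts trivially
outside a bounded set. -/
def Discrete (B : Ballean X) : Prop :=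
  B.Unbounded ∧ ∀ E ∈ B.entourages, ∃ S : Set X, B.IsBounded S ∧
    ∀ x ∉ S, ball E x = {x}

/-- A ballean has bounded growth if there is a growth entourage `G`. -/
def BoundedGrowth (B : Ballean X) : Prop :=
  ∃ G : Set (X × X),
    (∀ S : Set X, B.IsBounded S → B.IsBounded (img G S)) ∧
    (∀ E ∈ B.entourages, ∃ S : Set X, B.IsBounded S ∧ ∀ x ∉ S, ball E x ⊆ ball G x)

/-- The bornology of a ballean has a linearly ordered base. -/
def HasLinearBornBase (B : Ballean X) : Prop :=
  ∃ 𝒞 : Set (Set X), (∀ C ∈ 𝒞, B.IsBounded C) ∧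
    (∀ C ∈ 𝒞, ∀ D ∈ 𝒞, C ⊆ D ∨ D ⊆ C) ∧
    ∀ S : Set X, B.IsBounded S → ∃ C ∈ 𝒞, S ⊆ C

/-- The additivity of the bornology: the smallest cardinality of a family of bounded
sets with no bounded upper bound. -/
noncomputable def addBorn (B : Ballean X) : Cardinal.{u} :=
  sInf {c | ∃ 𝒜 : Set (Set X), (∀ A ∈ 𝒜, B.IsBounded A) ∧
    (¬ ∃ D : Set X, B.IsBounded D ∧ ∀ A ∈ 𝒜, A ⊆ D) ∧ c = Cardinal.mk ↥𝒜}

/-- The cofinality of the bornology: the smallest cardinality of a base of the bornology. -/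
noncomputable def cofBorn (B : Ballean X) : Cardinal.{u} :=
  sInf {c | ∃ 𝒞 : Set (Set X), (∀ C ∈ 𝒞, B.IsBounded C) ∧
    (∀ S : Set X, B.IsBounded S → ∃ C ∈ 𝒞, S ⊆ C) ∧ c = Cardinal.mk ↥𝒞}

/-- The cofinality of the family of entourages. -/
noncomputable def cofEnt (B : Ballean X) : Cardinal.{u} :=
  sInf {c | ∃ 𝒞 : Set (Set (X × X)), 𝒞 ⊆ B.entourages ∧
    (∀ E ∈ B.entourages, ∃ C ∈ 𝒞, E ⊆ C) ∧ c = Cardinal.mk ↥𝒞}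

/-- A ballean is `cof`-regular if `cof(𝓔) = cof(B_X)`. -/
def CofRegular (B : Ballean X) : Prop := B.cofEnt = B.cofBorn

end Ballean

/-- The entourages of the product of two balleans. -/
def prodEnt {X Y : Type u} (BX : Ballean X) (BY : Ballean Y) :
    Set (Set ((X × Y) × (X × Y))) :=
  {E | ∃ EX ∈ BX.entourages, ∃ EY ∈ BY.entourages,
    E = {p | (p.1.1, p.2.1) ∈ EX ∧ (p.1.2, p.2.2) ∈ EY}}

/-- The entourages of the box-product of a family of balleans. -/
def boxEnt {I : Type v} {X : I → Type u} (B : ∀ i, Ballean (X i)) :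
    Set (Set ((∀ i, X i) × (∀ i, X i))) :=
  {E | ∃ F : ∀ i, Set (X i × X i), (∀ i, F i ∈ (B i).entourages) ∧
    E = {p | ∀ i, (p.1 i, p.2 i) ∈ F i}}

/-- The entourages of the `n`-th power of a ballean. -/
def powEnt {X : Type u} (B : Ballean X) (n : ℕ) :
    Set (Set ((Fin n → X) × (Fin n → X))) :=
  {E | ∃ F : Fin n → Set (X × X), (∀ i, F i ∈ B.entourages) ∧
    E = {p | ∀ i, (p.1 i, p.2 i) ∈ F i}}

/-! In a discrete ballean an entourage moves only the points of a bounded set, so disjoint sets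
are asymptotically disjoint, and ultranormality makes one of any two disjoint sets bounded.

A base of the bornology has no bounded upper bound, so `add(B_X) ≤ cof(B_X)`. If the two were
equal, index a base `(C_i)` by the initial ordinal of `cof(B_X)`: each proper initial segment
indexes fewer than `add(B_X)` sets, so transfinite recursion picks distinct points `x_i`, `y_i`
off `C_i` and off all earlier points. Then `{x_i}` and `{y_i}` are disjoint and both unbounded.
A linearly ordered base, on the other hand, would force `cof(B_X) ≤ add(B_X)`. -/

theorem WellFoundedLT.exists_fun_forall_of_forall_exists {ι α : Type*} [LT ι] [WellFoundedLT ι]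
    (P : (i : ι) → (∀ j < i, α) → α → Prop) (h : ∀ i prev, ∃ a, P i prev a) :
    ∃ f : ι → α, ∀ i, P i (fun j _ => f j) (f i) :=
  ⟨WellFoundedLT.fix fun i prev => (h i prev).choose, fun i => by
    rw [WellFoundedLT.fix_eq]
    exact (h i _).choose_spec⟩

namespace Ballean

variable {X : Type u} {B : Ballean X} {S T : Set X}

theorem IsBounded.mono (hT : B.IsBounded T) (h : S ⊆ T) : B.IsBounded S :=
  let ⟨E, hE, x, hx⟩ := hT
  ⟨E, hE, x, h.trans hx⟩

theorem exists_mem_entourages (B : Ballean X) (p : X × X) : ∃ E ∈ B.entourages, p ∈ E := by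
  simpa [← mem_sUnion] using B.sUnion_eq_univ ▸ mem_univ p

theorem exists_swap_subset {F : Set (X × X)} (hF : F ∈ B.entourages) :
    ∃ D ∈ B.entourages, ∀ a b : X, (a, b) ∈ F → (b, a) ∈ D := by
  obtain ⟨D, hD, hsub⟩ := B.comp_inv_sub F hF F hF
  exact ⟨D, hD, fun a b hab => hsub ⟨b, B.diag_mem F hF b, hab⟩⟩

theorem exists_comp_subset {E F : Set (X × X)} (hE : E ∈ B.entourages) (hF : F ∈ B.entourages) :
    ∃ D ∈ B.entourages, ∀ a b c : X, (a, b) ∈ E → (b, c) ∈ F → (a, c) ∈ D := by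
  obtain ⟨F', hF', hswap⟩ := exists_swap_subset hF
  obtain ⟨D, hD, hsub⟩ := B.comp_inv_sub E hE F' hF'
  exact ⟨D, hD, fun a b c hab hbc => hsub ⟨b, hab, hswap b c hbc⟩⟩

theorem exists_union_subset {E F : Set (X × X)} (hE : E ∈ B.entourages)
    (hF : F ∈ B.entourages) : ∃ D ∈ B.entourages, E ⊆ D ∧ F ⊆ D := by
  obtain ⟨D, hD, hcomp⟩ := exists_comp_subset hE hF
  exact ⟨D, hD, fun p hp => hcomp _ _ _ hp (B.diag_mem F hF p.2),
    fun p hp => hcomp _ _ _ (B.diag_mem E hE p.1) hp⟩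

theorem IsBounded.union (hS : B.IsBounded S) (hT : B.IsBounded T) : B.IsBounded (S ∪ T) := by
  obtain ⟨E, hE, x, hx⟩ := hS
  obtain ⟨F, hF, y, hy⟩ := hT
  obtain ⟨G, hG, hxy⟩ := B.exists_mem_entourages (x, y)
  obtain ⟨D₁, hD₁, hcomp⟩ := exists_comp_subset hG hF
  obtain ⟨D, hD, hED, hD₁D⟩ := exists_union_subset hE hD₁
  exact ⟨D, hD, x, union_subset (hx.trans fun z hz => hED hz)
    fun z hz => hD₁D (hcomp x y z hxy (hy hz))⟩

theorem isBounded_singleton (B : Ballean X) (a : X) : B.IsBounded {a} := by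
  obtain ⟨E, hE, -⟩ := B.exists_mem_entourages (a, a)
  exact ⟨E, hE, a, singleton_subset_iff.2 (B.diag_mem E hE a)⟩

theorem IsBounded.insert (hS : B.IsBounded S) (a : X) : B.IsBounded (insert a S) :=
  (B.isBounded_singleton a).union hS

theorem IsBounded.img {E : Set (X × X)} (hS : B.IsBounded S) (hE : E ∈ B.entourages) :
    B.IsBounded (img E S) := by
  obtain ⟨F, hF, x, hx⟩ := hS
  obtain ⟨D, hD, hcomp⟩ := exists_comp_subset hF hE
  exact ⟨D, hD, x, fun z ⟨a, ha, haz⟩ => hcomp x a z (hx ha) haz⟩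

theorem Unbounded.exists_notMem (hX : B.Unbounded) (hS : B.IsBounded S) : ∃ x, x ∉ S := by
  by_contra! h
  exact hX (hS.mono fun x _ => h x)

theorem Unbounded.exists_ne_notMem (hX : B.Unbounded) (hS : B.IsBounded S) :
    ∃ p : X × X, p.1 ≠ p.2 ∧ p.1 ∉ S ∧ p.2 ∉ S := by
  obtain ⟨x, hx⟩ := hX.exists_notMem hS
  obtain ⟨y, hy⟩ := hX.exists_notMem (hS.insert x)
  exact ⟨(x, y), fun h : x = y => hy (h ▸ mem_insert x S), hx,
    fun h => hy (mem_insert_of_mem x h)⟩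

/-- Outside a bounded set an entourage of a discrete ballean moves no point, so the
`E`-neighbourhoods of disjoint sets can only meet near that bounded set. -/
theorem Discrete.asympDisjoint_of_disjoint (hdis : B.Discrete) {Y Z : Set X}
    (hYZ : Disjoint Y Z) : B.AsympDisjoint Y Z := by
  intro E hE
  obtain ⟨S, hS, hball⟩ := hdis.2 E hE
  have img_subset (W : Set X) : img E W ⊆ W ∪ img E S := by
    rintro z ⟨a, ha, haz⟩
    by_cases haS : a ∈ S
    · exact Or.inr ⟨a, haS, haz⟩
    · have hz : z ∈ ball E a := haz
      rw [hball a haS, mem_singleton_iff] at hz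
      exact Or.inl (hz ▸ ha)
  refine (hS.img hE).mono fun z ⟨hY, hZ⟩ => ?_
  rcases img_subset Y hY with hY | hY
  · rcases img_subset Z hZ with hZ | hZ
    · exact absurd hZ (hYZ.notMem_of_mem_left hY)
    · exact hZ
  · exact hY

theorem isBounded_or_isBounded_of_disjoint (hdis : B.Discrete) (hun : B.Ultranormal)
    {Y Z : Set X} (hYZ : Disjoint Y Z) : B.IsBounded Y ∨ B.IsBounded Z :=
  hun Y Z (hdis.asympDisjoint_of_disjoint hYZ)

theorem exists_not_isBounded_iUnion_Iio (hdis : B.Discrete) (hun : B.Ultranormal)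
    {ι : Type*} [LinearOrder ι] [WellFoundedLT ι] {C : ι → Set X}
    (hCb : ∀ i, B.IsBounded (C i)) (hC : ∀ S, B.IsBounded S → ∃ i, S ⊆ C i) :
    ∃ i : ι, ∃ f : Iio i → Set X, (∀ j, B.IsBounded (f j)) ∧ ¬ B.IsBounded (⋃ j, f j) := by
  by_contra! hsmall
  let avoid (i : ι) (prev : ∀ j < i, X × X) : Set X :=
    C i ∪ ⋃ j : Iio i, {(prev j j.2).1, (prev j j.2).2}
  obtain ⟨p, hp⟩ := WellFoundedLT.exists_fun_forall_of_forall_exists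
    (fun i prev q => q.1 ≠ q.2 ∧ q.1 ∉ avoid i prev ∧ q.2 ∉ avoid i prev)
    fun i prev => hdis.1.exists_ne_notMem <| (hCb i).union <|
      hsmall i _ fun j => (B.isBounded_singleton _).insert _
  have mem_avoid {j i : ι} (hji : j < i) :
      (p j).1 ∈ avoid i (fun k _ => p k) ∧ (p j).2 ∈ avoid i (fun k _ => p k) :=
    ⟨Or.inr (mem_iUnion.2 ⟨⟨j, hji⟩, Or.inl rfl⟩),
      Or.inr (mem_iUnion.2 ⟨⟨j, hji⟩, Or.inr rfl⟩)⟩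
  have hdisj : Disjoint (range fun i => (p i).1) (range fun i => (p i).2) := by
    refine disjoint_left.2 ?_
    rintro _ ⟨i, rfl⟩ ⟨j, heq : (p j).2 = (p i).1⟩
    rcases lt_trichotomy i j with hij | rfl | hji
    · exact (hp j).2.2 (heq ▸ (mem_avoid hij).1)
    · exact (hp i).1 heq.symm
    · exact (hp i).2.1 (heq ▸ (mem_avoid hji).2)
  rcases isBounded_or_isBounded_of_disjoint hdis hun hdisj with hbdd | hbdd
  · obtain ⟨i, hi⟩ := hC _ hbdd
    exact (hp i).2.1 (Or.inl (hi (mem_range_self i)))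
  · obtain ⟨i, hi⟩ := hC _ hbdd
    exact (hp i).2.2 (Or.inl (hi (mem_range_self i)))

theorem addBorn_le {𝒜 : Set (Set X)} (h𝒜 : ∀ A ∈ 𝒜, B.IsBounded A)
    (hub : ¬ ∃ D, B.IsBounded D ∧ ∀ A ∈ 𝒜, A ⊆ D) : B.addBorn ≤ Cardinal.mk 𝒜 :=
  csInf_le' ⟨𝒜, h𝒜, hub, rfl⟩

theorem exists_isBounded_upperBound_of_lt_addBorn {𝒜 : Set (Set X)}
    (h𝒜 : ∀ A ∈ 𝒜, B.IsBounded A) (hcard : Cardinal.mk 𝒜 < B.addBorn) :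
    ∃ D, B.IsBounded D ∧ ∀ A ∈ 𝒜, A ⊆ D := by
  by_contra hub
  exact (addBorn_le h𝒜 hub).not_gt hcard

theorem Unbounded.not_exists_upperBound_of_base (hX : B.Unbounded) {𝒞 : Set (Set X)}
    (hbase : ∀ S, B.IsBounded S → ∃ C ∈ 𝒞, S ⊆ C) :
    ¬ ∃ D, B.IsBounded D ∧ ∀ C ∈ 𝒞, C ⊆ D := by
  rintro ⟨D, hD, hub⟩
  obtain ⟨x, hx⟩ := hX.exists_notMem hD
  obtain ⟨C, hC, hsub⟩ := hbase _ (hD.insert x)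
  exact hx (hub C hC (hsub (mem_insert x D)))

theorem Unbounded.exists_card_eq_addBorn (hX : B.Unbounded) :
    ∃ 𝒜 : Set (Set X), (∀ A ∈ 𝒜, B.IsBounded A) ∧
      (¬ ∃ D, B.IsBounded D ∧ ∀ A ∈ 𝒜, A ⊆ D) ∧ B.addBorn = Cardinal.mk 𝒜 := by
  unfold addBorn
  exact csInf_mem (s := {c | ∃ 𝒜 : Set (Set X), (∀ A ∈ 𝒜, B.IsBounded A) ∧
      (¬ ∃ D, B.IsBounded D ∧ ∀ A ∈ 𝒜, A ⊆ D) ∧ c = Cardinal.mk 𝒜})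
    ⟨_, {A | B.IsBounded A}, fun _ hA => hA,
      hX.not_exists_upperBound_of_base fun S hS => ⟨S, hS, subset_rfl⟩, rfl⟩

theorem cofBorn_le {𝒞 : Set (Set X)} (h𝒞 : ∀ C ∈ 𝒞, B.IsBounded C)
    (hbase : ∀ S, B.IsBounded S → ∃ C ∈ 𝒞, S ⊆ C) : B.cofBorn ≤ Cardinal.mk 𝒞 :=
  csInf_le' ⟨𝒞, h𝒞, hbase, rfl⟩

theorem exists_card_eq_cofBorn (B : Ballean X) :
    ∃ 𝒞 : Set (Set X), (∀ C ∈ 𝒞, B.IsBounded C) ∧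
      (∀ S, B.IsBounded S → ∃ C ∈ 𝒞, S ⊆ C) ∧ B.cofBorn = Cardinal.mk 𝒞 := by
  unfold cofBorn
  exact csInf_mem (s := {c | ∃ 𝒞 : Set (Set X), (∀ C ∈ 𝒞, B.IsBounded C) ∧
      (∀ S, B.IsBounded S → ∃ C ∈ 𝒞, S ⊆ C) ∧ c = Cardinal.mk 𝒞})
    ⟨_, {A | B.IsBounded A}, fun _ hA => hA, fun S hS => ⟨S, hS, subset_rfl⟩, rfl⟩

theorem Unbounded.addBorn_le_cofBorn (hX : B.Unbounded) : B.addBorn ≤ B.cofBorn := by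
  obtain ⟨𝒞, h𝒞, hbase, hcard⟩ := B.exists_card_eq_cofBorn
  exact hcard ▸ addBorn_le h𝒞 (hX.not_exists_upperBound_of_base hbase)

/-- Sets of the linear base that swallow the members of an unbounded-above family `𝒜` can
have no bound in the base, so by linearity they are cofinal in it. -/
theorem HasLinearBornBase.cofBorn_le_addBorn (hlin : B.HasLinearBornBase) (hX : B.Unbounded) :
    B.cofBorn ≤ B.addBorn := by
  obtain ⟨𝒞, h𝒞, hchain, hbase⟩ := hlin
  obtain ⟨𝒜, h𝒜, hub, hcard⟩ := hX.exists_card_eq_addBorn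
  choose f hf𝒞 hfA using fun A : 𝒜 => hbase A (h𝒜 A A.2)
  have hrange : ∀ S, B.IsBounded S → ∃ C ∈ range f, S ⊆ C := by
    intro S hS
    obtain ⟨D, hD, hSD⟩ := hbase S hS
    obtain ⟨A, hA, hAD⟩ : ∃ A ∈ 𝒜, ¬ A ⊆ D := by
      by_contra! h
      exact hub ⟨D, h𝒞 D hD, h⟩
    have hfD : ¬ f ⟨A, hA⟩ ⊆ D := fun h => hAD ((hfA _).trans h)
    exact ⟨_, mem_range_self _, hSD.trans ((hchain _ (hf𝒞 _) D hD).resolve_left hfD)⟩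
  calc B.cofBorn ≤ Cardinal.mk (range f) :=
        cofBorn_le (by rintro _ ⟨A, rfl⟩; exact h𝒞 _ (hf𝒞 A)) hrange
    _ ≤ Cardinal.mk 𝒜 := Cardinal.mk_range_le
    _ = B.addBorn := hcard.symm

theorem addBorn_ne_cofBorn (hdis : B.Discrete) (hun : B.Ultranormal) :
    B.addBorn ≠ B.cofBorn := by
  intro heq
  obtain ⟨𝒞, h𝒞, hbase, hcard⟩ := B.exists_card_eq_cofBorn
  obtain ⟨e⟩ := Cardinal.eq.1 (Cardinal.mk_ord_toType (Cardinal.mk 𝒞))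
  obtain ⟨i, f, hf, hunb⟩ := exists_not_isBounded_iUnion_Iio hdis hun
    (C := fun i => (e i : Set X)) (fun i => h𝒞 _ (e i).2) fun S hS => by
      obtain ⟨C, hC, hSC⟩ := hbase S hS
      exact ⟨e.symm ⟨C, hC⟩, by simpa using hSC⟩
  have hsmall : Cardinal.mk (range f) < B.addBorn :=
    calc Cardinal.mk (range f) ≤ Cardinal.mk (Iio i) := Cardinal.mk_range_le
      _ < Cardinal.mk 𝒞 := by simpa using Cardinal.mk_Iio_lt i (by simp)
      _ = B.addBorn := by rw [heq, hcard]
  obtain ⟨D, hD, hub⟩ := exists_isBounded_upperBound_of_lt_addBorn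
    (by rintro _ ⟨j, rfl⟩; exact hf j) hsmall
  exact hunb (hD.mono (iUnion_subset fun j => hub _ (mem_range_self j)))

end Ballean

/-- for any ultradiscrete (i.e. discrete and ultranormal) ballean,
`add(B_X) < cof(B_X)`; in particular its bornology has no linearly ordered base. -/
theorem statement18 {X : Type u} (B : Ballean X)
    (hdis : B.Discrete) (hun : B.Ultranormal) :
    B.addBorn < B.cofBorn ∧ ¬ B.HasLinearBornBase :=
  have hlt := lt_of_le_of_ne hdis.1.addBorn_le_cofBorn (Ballean.addBorn_ne_cofBorn hdis hun)
  ⟨hlt, fun hlin => (hlin.cofBorn_le_addBorn hdis.1).not_gt hlt⟩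
end

section
/- For a discrete ballean (X,𝓔) the following conditions are equivalent: (1) X is ultranormal; (2) the bornology B_X is a maximal ideal on X, i.e., for every subset A ⊆ X either A ∈ B_X or X \ A ∈ B_X; (3) the family {X \ B : B ∈ B_X} is an ultrafilter on X. -/
universe u v

open Set

namespace Ballean

variable {X : Type u}

lemma isBounded_subset' {B : Ballean X} {S T : Set X} (h : B.IsBounded T) (hs : S ⊆ T) :
    B.IsBounded S := by
  obtain ⟨E, hE, x, hx⟩ := h
  exact ⟨E, hE, x, hs.trans hx⟩

lemma exists_inv' {B : Ballean X} {F : Set (X × X)} (hF : F ∈ B.entourages) :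
    ∃ D ∈ B.entourages, F ⊆ D ∧ ∀ a b : X, (a, b) ∈ F → (b, a) ∈ D := by
  obtain ⟨D, hD, hsub⟩ := B.comp_inv_sub F hF F hF
  refine ⟨D, hD, ?_, ?_⟩
  · intro p hp
    exact hsub ⟨p.2, hp, B.diag_mem F hF p.2⟩
  · intro a b hab
    exact hsub ⟨b, B.diag_mem F hF b, hab⟩

lemma exists_comp' {B : Ballean X} {E F : Set (X × X)} (hE : E ∈ B.entourages)
    (hF : F ∈ B.entourages) :
    ∃ D ∈ B.entourages, ∀ x y z : X, (x, y) ∈ E → (y, z) ∈ F → (x, z) ∈ D := by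
  obtain ⟨F1, hF1, _, hFinv⟩ := exists_inv' hF
  obtain ⟨D, hD, hsub⟩ := B.comp_inv_sub E hE F1 hF1
  exact ⟨D, hD, fun x y z hxy hyz => hsub ⟨y, hxy, hFinv y z hyz⟩⟩

lemma exists_union_ent' {B : Ballean X} {E F : Set (X × X)} (hE : E ∈ B.entourages)
    (hF : F ∈ B.entourages) : ∃ D ∈ B.entourages, E ⊆ D ∧ F ⊆ D := by
  obtain ⟨F1, hF1, hFsub, hFinv⟩ := exists_inv' hF
  obtain ⟨D, hD, hsub⟩ := B.comp_inv_sub E hE F1 hF1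
  refine ⟨D, hD, ?_, ?_⟩
  · intro p hp
    exact hsub ⟨p.2, hp, B.diag_mem F1 hF1 p.2⟩
  · intro p hp
    exact hsub ⟨p.1, B.diag_mem E hE p.1, hFinv p.1 p.2 hp⟩

lemma isBounded_union' {B : Ballean X} {S T : Set X} (hS : B.IsBounded S)
    (hT : B.IsBounded T) : B.IsBounded (S ∪ T) := by
  obtain ⟨E1, hE1, x1, hx1⟩ := hS
  obtain ⟨E2, hE2, x2, hx2⟩ := hT
  have hmem : (x1, x2) ∈ ⋃₀ B.entourages := by rw [B.sUnion_eq_univ]; trivial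
  obtain ⟨E0, hE0, hx12⟩ := hmem
  obtain ⟨D1, hD1, hcomp⟩ := exists_comp' hE0 hE2
  obtain ⟨D, hD, hED, hDD⟩ := exists_union_ent' hE1 hD1
  refine ⟨D, hD, x1, ?_⟩
  rintro y (hy | hy)
  · exact hED (hx1 hy)
  · exact hDD (hcomp x1 x2 y hx12 (hx2 hy))

lemma isBounded_img' {B : Ballean X} {E : Set (X × X)} (hE : E ∈ B.entourages)
    {S : Set X} (hS : B.IsBounded S) : B.IsBounded (img E S) := by
  obtain ⟨E1, hE1, x, hx⟩ := hS
  obtain ⟨D, hD, hcomp⟩ := exists_comp' hE1 hE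
  refine ⟨D, hD, x, ?_⟩
  rintro y ⟨a, haS, haE⟩
  exact hcomp x a y (hx haS) haE

lemma asympDisjoint_of_disjoint' {B : Ballean X} (hdis : B.Discrete) {A C : Set X}
    (h : Disjoint A C) : B.AsympDisjoint A C := by
  intro E hE
  obtain ⟨S, hSb, hSball⟩ := hdis.2 E hE
  refine isBounded_subset' (isBounded_img' hE hSb) ?_
  rintro y ⟨⟨a, haA, haE⟩, ⟨c, hcC, hcE⟩⟩
  by_cases haS : a ∈ S
  · exact ⟨a, haS, haE⟩
  by_cases hcS : c ∈ S
  · exact ⟨c, hcS, hcE⟩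
  · exfalso
    have hya : y = a := by
      have h' : y ∈ ball E a := haE
      rw [hSball a haS] at h'
      simpa using h'
    have hyc : y = c := by
      have h' : y ∈ ball E c := hcE
      rw [hSball c hcS] at h'
      simpa using h'
    exact (h.ne_of_mem haA hcC) (hya ▸ hyc ▸ rfl)

end Ballean

/-- STATEMENT 19: for a discrete ballean `X` the following are equivalent:
(1) `X` is ultranormal; (2) the bornology `B_X` is a maximal ideal on `X`
(every subset or its complement is bounded); (3) the family `{X \ B : B ∈ B_X}` is an
ultrafilter on `X`. -/
theorem statement19 {X : Type u} (B : Ballean X) (hdis : B.Discrete) :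
    (B.Ultranormal ↔ ∀ A : Set X, B.IsBounded A ∨ B.IsBounded Aᶜ) ∧
    (B.Ultranormal ↔ ∃ U : Ultrafilter X, ∀ S : Set X, S ∈ U ↔ B.IsBounded Sᶜ) := by
  have h12 : B.Ultranormal ↔ ∀ A : Set X, B.IsBounded A ∨ B.IsBounded Aᶜ := by
    constructor
    · intro hu A
      exact hu A Aᶜ (Ballean.asympDisjoint_of_disjoint' hdis disjoint_compl_right)
    · intro h2 A C hAC
      by_contra hcon
      push_neg at hcon
      obtain ⟨hA, hC⟩ := hcon
      have hAc : B.IsBounded Aᶜ := (h2 A).resolve_left hA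
      obtain ⟨E, hEm, x, -⟩ : ∃ E ∈ B.entourages, ∃ x : X, True := by
        rcases h2 Set.univ with h | h
        · exact absurd h hdis.1
        · obtain ⟨E, hE, x, -⟩ := h
          exact ⟨E, hE, x, trivial⟩
      have hsub : A ∩ C ⊆ Ballean.img E A ∩ Ballean.img E C := by
        rintro y ⟨hyA, hyC⟩
        exact ⟨⟨y, hyA, B.diag_mem E hEm y⟩, ⟨y, hyC, B.diag_mem E hEm y⟩⟩
      have hACb : B.IsBounded (A ∩ C) := Ballean.isBounded_subset' (hAC E hEm) hsub
      refine hC (Ballean.isBounded_subset' (Ballean.isBounded_union' hACb hAc) ?_)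
      intro y hy
      by_cases h : y ∈ A
      · exact Or.inl ⟨h, hy⟩
      · exact Or.inr h
  refine ⟨h12, h12.trans ?_⟩
  constructor
  · intro h2
    have hne : B.IsBounded (∅ : Set X) := by
      rcases h2 Set.univ with h | h
      · exact absurd h hdis.1
      · simpa using h
    have hkey : ∀ s : Set X, ¬ B.IsBounded s ↔ B.IsBounded sᶜ := by
      intro s
      constructor
      · intro h
        exact (h2 s).resolve_left h
      · intro h hs
        refine hdis.1 (Ballean.isBounded_subset' (Ballean.isBounded_union' hs h) ?_)
        intro y _
        by_cases hy : y ∈ s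
        · exact Or.inl hy
        · exact Or.inr hy
    let F : Filter X :=
      { sets := {S | B.IsBounded Sᶜ}
        univ_sets := by simpa using hne
        sets_of_superset := fun hS hsub =>
          Ballean.isBounded_subset' hS (compl_subset_compl.2 hsub)
        inter_sets := fun hS hT => by
          rw [Set.mem_setOf_eq, Set.compl_inter]
          exact Ballean.isBounded_union' hS hT }
    have hmemF : ∀ S : Set X, S ∈ F ↔ B.IsBounded Sᶜ := fun S => Iff.rfl
    refine ⟨Ultrafilter.ofComplNotMemIff F ?_, ?_⟩
    · intro s
      rw [hmemF, hmemF, compl_compl]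
      exact hkey s
    · intro S
      exact hmemF S
  · rintro ⟨U, hU⟩ A
    rcases U.mem_or_compl_mem A with h | h
    · exact Or.inr ((hU A).1 h)
    · refine Or.inl ?_
      have := (hU Aᶜ).1 h
      simpa using this
end
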